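/- Galton–Watson representation of the exposed process in the CP thinning model: let G be a probability distribution on ℕ, τ > 0, κ > 0, 0 ≤ β < 1. For e ∈ ℕ, consider the one-step transition of the thinning-based CP-INGARCH(1,1) model from E = e: draw L ~ Binomial(e, β), set A = e − L, draw I ~ Poisson(τ) independently, set X = Σ_{i=1}^{I + A} Z_i with Z_i i.i.d. ~ G, draw C given X as Poisson(κ·X) (i.e., C = κ ⋆ X), and set E' = L + C. Then the distribution of E' equals the distribution of Σ_{k=1}^{e} B_k + I*, where the B_k are i.i.d. copies of the offspring variable B (B = 1 with probability β, and with probability 1 − β, B = κ ⋆ (ψ *_G 1), i.e. B = Σ_{i=1}^{Z} P_i with Z ~ G and the P_i i.i.d. Poisson(κ)), I* is the immigration variable κ ⋆ (ψ *_G I) with I ~ Poisson(τ), and B_1, …, B_e, I* are mutually independent. -/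

import Mathlib

open ProbabilityTheory
open scoped NNReal ENNReal

/-- Binomial thinning `β ∘ n`: the number of successes among `n` Bernoulli(β) trials. -/
noncomputable def binThin (b : ℝ≥0∞) (hb : b ≤ 1) (n : ℕ) : PMF ℕ :=
  (PMF.binomial b.toNNReal (by simpa using ENNReal.toNNReal_mono ENNReal.one_ne_top hb) n).map Fin.val

/-- `G`-compounding `ψ *_G n`: the distribution of the sum of `n` i.i.d. draws from `G`. -/
noncomputable def compG (G : PMF ℕ) : ℕ → PMF ℕ
  | 0 => PMF.pure 0
  | n + 1 => (compG G n).bind fun s => G.map fun z => s + z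

/-- The offspring distribution of the Galton–Watson representation: `B = 1` with probability
`β`, and with probability `1 - β`, `B = κ ⋆ (ψ *_G 1)`, i.e. `B | Z ~ Pois(κ·Z)` with
`Z ~ G` (a sum of `Z` i.i.d. Poisson(κ) variables). -/
noncomputable def offspring (G : PMF ℕ) (κ : ℝ≥0) (b : ℝ≥0∞) (hb : b ≤ 1) : PMF ℕ :=
  (PMF.bernoulli b.toNNReal (by simpa using ENNReal.toNNReal_mono ENNReal.one_ne_top hb)).bind fun coin =>
    if coin then PMF.pure 1 else G.bind fun z => poissonPMF (κ * z)

/-- The sum of `e` i.i.d. draws from the offspring distribution. -/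
noncomputable def offspringSum (G : PMF ℕ) (κ : ℝ≥0) (b : ℝ≥0∞) (hb : b ≤ 1) :
    ℕ → PMF ℕ
  | 0 => PMF.pure 0
  | e + 1 => (offspringSum G κ b hb e).bind fun s =>
      (offspring G κ b hb).map fun x => s + x

/-- The immigration distribution `I* = κ ⋆ (ψ *_G I)` with `I ~ Pois(τ)`: draw
`I ~ Pois(τ)`, then `Y = ψ *_G I`, then `I* | Y ~ Pois(κ·Y)`. -/
noncomputable def immigration (G : PMF ℕ) (τ κ : ℝ≥0) : PMF ℕ :=
  (poissonPMF τ).bind fun i => (compG G i).bind fun y => poissonPMF (κ * y)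

/-!
Poisson laws convolve by adding their rates, so Poisson thinning is additive:
`κ ⋆ (m + n) = κ ⋆ m + κ ⋆ n` in law; `G`-compounding is additive as well. Hence
`W a := κ ⋆ (ψ *_G a)` satisfies `W (a + b) = W a ∗ W b`. Given `L = l` and `I = i`, the new
count is `l + W (i + (e - l)) = (l + W (e - l)) + W i`, and `W I` with `I ~ Pois(τ)` is the
immigration `I*`. It remains to see that `L + W (e - L)` with `L ~ Bin(e, β)` is a sum of `e`
offspring variables. Induct on `e`: the extra individual either survives (probability `β`,
contributing `1`) or is removed, and its slot, compounded and thinned, contributes an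
independent `W 1`; this is exactly one draw of `B`.
-/

open MeasureTheory

namespace PMF

theorem bind_congr_support {α β : Type*} (p : PMF α) {f g : α → PMF β}
    (h : ∀ a ∈ p.support, f a = g a) : p.bind f = p.bind g := by
  ext x
  simp only [bind_apply]
  refine tsum_congr fun a => ?_
  by_cases ha : p a = 0
  · simp [ha]
  · rw [h a ha]

noncomputable def conv (p q : PMF ℕ) : PMF ℕ :=
  p.bind fun a => q.bind fun b => pure (a + b)

theorem conv_comm (p q : PMF ℕ) : conv p q = conv q p := by
  rw [conv, conv, bind_comm]
  simp only [add_comm]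

theorem conv_assoc (p q r : PMF ℕ) : conv (conv p q) r = conv p (conv q r) := by
  simp only [conv, bind_bind, pure_bind, add_assoc]

theorem pure_conv_pure (a b : ℕ) : conv (pure a) (pure b) = pure (a + b) := by
  simp only [conv, pure_bind]

theorem conv_pure_zero (p : PMF ℕ) : conv p (pure 0) = p := by
  simp only [conv, pure_bind, add_zero, bind_pure]

theorem bind_conv {α : Type*} (p : PMF α) (f : α → PMF ℕ) (q : PMF ℕ) :
    conv (p.bind f) q = p.bind fun a => conv (f a) q := by
  simp only [conv, bind_bind]

theorem conv_bind {α : Type*} (p : PMF ℕ) (q : PMF α) (f : α → PMF ℕ) :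
    conv p (q.bind f) = q.bind fun b => conv p (f b) := by
  rw [conv_comm, bind_conv]
  simp only [conv_comm]

theorem toMeasure_conv (p q : PMF ℕ) : (conv p q).toMeasure = p.toMeasure ∗ q.toMeasure := by
  ext s hs
  simp only [conv, toMeasure_bind_apply _ _ _ hs, toMeasure_pure_apply _ _ hs]
  rw [← lintegral_indicator_one hs, Measure.lintegral_conv (measurable_one.indicator hs),
    lintegral_countable']
  refine tsum_congr fun a => ?_
  rw [lintegral_countable', toMeasure_apply_singleton _ _ (measurableSet_singleton a), mul_comm]
  simp only [toMeasure_apply_singleton _ _ (measurableSet_singleton _), mul_comm (q _)]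
  rfl

theorem conv_bind_of_map_add {K : ℕ → PMF ℕ} (hK : ∀ a b, K (a + b) = conv (K a) (K b))
    (p q : PMF ℕ) : (conv p q).bind K = conv (p.bind K) (q.bind K) := by
  rw [bind_conv]
  simp only [conv_bind, ← hK]
  simp only [conv, bind_bind, pure_bind]

end PMF

theorem toMeasure_poissonPMF (r : ℝ≥0) : (poissonPMF r).toMeasure = poissonMeasure r :=
  Measure.ext_of_singleton fun n => by
    rw [PMF.toMeasure_apply_singleton _ _ (measurableSet_singleton n), poissonMeasure_singleton]
    rfl

theorem poissonPMF_conv_poissonPMF (r s : ℝ≥0) :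
    PMF.conv (poissonPMF r) (poissonPMF s) = poissonPMF (r + s) :=
  PMF.toMeasure_injective <| by
    rw [PMF.toMeasure_conv, toMeasure_poissonPMF, toMeasure_poissonPMF, toMeasure_poissonPMF,
      poissonMeasure_conv_poissonMeasure]

theorem poissonPMF_mul_natCast_add (κ : ℝ≥0) (a b : ℕ) :
    poissonPMF (κ * ↑(a + b)) = PMF.conv (poissonPMF (κ * a)) (poissonPMF (κ * b)) := by
  rw [poissonPMF_conv_poissonPMF, Nat.cast_add, mul_add]

theorem poissonPMF_zero : poissonPMF 0 = PMF.pure 0 := by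
  ext n
  rw [← poissonPMFReal_ofReal_eq_poissonPMF]
  rcases n with _ | n <;> simp [poissonPMFReal]

theorem compG_succ (G : PMF ℕ) (n : ℕ) : compG G (n + 1) = PMF.conv (compG G n) G := rfl

theorem compG_one (G : PMF ℕ) : compG G 1 = G := by
  rw [compG, compG, PMF.pure_bind]
  simp only [zero_add]
  exact PMF.map_id G

theorem compG_add (G : PMF ℕ) (m n : ℕ) :
    compG G (m + n) = PMF.conv (compG G m) (compG G n) := by
  induction n with
  | zero => exact (PMF.conv_pure_zero _).symm
  | succ n ih =>
    rw [← add_assoc, compG_succ, compG_succ, ih, PMF.conv_assoc]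

section BinomialThinning

variable {b : ℝ≥0∞} (hb : b ≤ 1)

noncomputable def bernoulliCoin : PMF Bool :=
  PMF.bernoulli b.toNNReal (by simpa using ENNReal.toNNReal_mono ENNReal.one_ne_top hb)

theorem bernoulliCoin_apply (c : Bool) : bernoulliCoin hb c = cond c b (1 - b) := by
  erw [bernoulliCoin, PMF.bernoulli_apply]
  cases c <;> simp [ENNReal.coe_toNNReal (ne_top_of_le_ne_top ENNReal.one_ne_top hb)]

theorem binThin_apply (n k : ℕ) :
    binThin b hb n k = b ^ k * (1 - b) ^ (n - k) * n.choose k := by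
  rw [binThin, PMF.map_apply]
  rcases le_or_gt k n with hk | hk
  · rw [tsum_eq_single (⟨k, Nat.lt_succ_of_le hk⟩ : Fin (n + 1))]
    · rw [if_pos rfl]; erw [PMF.binomial_apply]
      rw [ENNReal.coe_toNNReal (ne_top_of_le_ne_top ENNReal.one_ne_top hb)]
      rfl
    · intro i hi
      exact if_neg fun h => hi (Fin.ext h.symm)
  · rw [Nat.choose_eq_zero_of_lt hk, Nat.cast_zero, mul_zero, ENNReal.tsum_eq_zero]
    intro i
    exact if_neg (by omega)

theorem binThin_zero : binThin b hb 0 = PMF.pure 0 := by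
  ext k
  rcases k with _ | k <;> simp [binThin_apply]

theorem le_of_mem_support_binThin {n k : ℕ} (hk : k ∈ (binThin b hb n).support) : k ≤ n := by
  by_contra h
  rw [PMF.mem_support_iff, binThin_apply, Nat.choose_eq_zero_of_lt (by omega)] at hk
  simp at hk

theorem binThin_succ_apply_zero (n : ℕ) :
    binThin b hb (n + 1) 0 = (1 - b) * binThin b hb n 0 := by
  simp [binThin_apply, pow_succ, mul_comm]

theorem binThin_succ_apply_succ (n j : ℕ) :
    binThin b hb (n + 1) (j + 1) = (1 - b) * binThin b hb n (j + 1) + b * binThin b hb n j := by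
  simp only [binThin_apply, Nat.choose_succ_succ', Nat.add_sub_add_right, Nat.cast_add]
  rcases lt_or_ge j n with hj | hj
  · obtain ⟨m, rfl⟩ := Nat.exists_eq_add_of_lt hj
    rw [show j + m + 1 - (j + 1) = m by omega, show j + m + 1 - j = m + 1 by omega]
    ring
  · rw [Nat.choose_eq_zero_of_lt (by omega : n < j + 1), Nat.sub_eq_zero_of_le hj]
    ring

theorem binThin_succ (n : ℕ) :
    binThin b hb (n + 1) = PMF.conv (binThin b hb n) ((bernoulliCoin hb).map (cond · 1 0)) := by
  ext k
  rw [PMF.conv_comm, PMF.conv, PMF.bind_map, PMF.bind_apply, tsum_bool]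
  simp only [Function.comp, cond_false, cond_true, zero_add, PMF.bind_pure, bernoulliCoin_apply]
  rcases k with _ | j
  · simp [binThin_succ_apply_zero, add_comm 1]
  · simp [binThin_succ_apply_succ, add_comm 1]

end BinomialThinning

section GaltonWatson

variable (G : PMF ℕ) (κ : ℝ≥0)

/-- `κ ⋆ (ψ *_G a)` in the paper's notation. -/
noncomputable def thinnedCompound (a : ℕ) : PMF ℕ :=
  (compG G a).bind fun x => poissonPMF (κ * x)

theorem thinnedCompound_add (a b : ℕ) :
    thinnedCompound G κ (a + b) = PMF.conv (thinnedCompound G κ a) (thinnedCompound G κ b) := by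
  rw [thinnedCompound, compG_add, PMF.conv_bind_of_map_add (poissonPMF_mul_natCast_add κ)]
  rfl

theorem thinnedCompound_zero : thinnedCompound G κ 0 = PMF.pure 0 := by
  rw [thinnedCompound, compG, PMF.pure_bind, Nat.cast_zero, mul_zero, poissonPMF_zero]

theorem offspring_eq {b : ℝ≥0∞} (hb : b ≤ 1) :
    offspring G κ b hb =
      (bernoulliCoin hb).bind fun c => if c then PMF.pure 1 else thinnedCompound G κ 1 := by
  rw [thinnedCompound, compG_one]
  rfl

theorem binThin_bind_conv_thinnedCompound {b : ℝ≥0∞} (hb : b ≤ 1) (e : ℕ) :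
    ((binThin b hb e).bind fun l => PMF.conv (PMF.pure l) (thinnedCompound G κ (e - l))) =
      offspringSum G κ b hb e := by
  induction e with
  | zero =>
    rw [binThin_zero, PMF.pure_bind, thinnedCompound_zero, PMF.pure_conv_pure]
    rfl
  | succ e ih =>
    have step : ∀ l ∈ (binThin b hb e).support,
        ((bernoulliCoin hb).bind fun c =>
          PMF.conv (PMF.pure (l + cond c 1 0)) (thinnedCompound G κ (e + 1 - (l + cond c 1 0)))) =
        PMF.conv (PMF.conv (PMF.pure l) (thinnedCompound G κ (e - l))) (offspring G κ b hb) := by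
      intro l hl
      have hle : l ≤ e := le_of_mem_support_binThin hb hl
      rw [offspring_eq, PMF.conv_bind]
      refine PMF.bind_congr_support _ fun c _ => ?_
      cases c
      · rw [if_neg Bool.false_ne_true, cond_false, add_zero, Nat.sub_add_comm hle,
          thinnedCompound_add, ← PMF.conv_assoc]
      · rw [if_pos rfl, cond_true, Nat.add_sub_add_right, PMF.conv_assoc,
          PMF.conv_comm _ (PMF.pure 1), ← PMF.conv_assoc, PMF.pure_conv_pure]
    calc _ = (binThin b hb e).bind fun l => (bernoulliCoin hb).bind fun c =>
            PMF.conv (PMF.pure (l + cond c 1 0))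
              (thinnedCompound G κ (e + 1 - (l + cond c 1 0))) := by
          simp only [binThin_succ, PMF.conv, PMF.bind_bind, PMF.bind_map, Function.comp_apply,
            PMF.pure_bind]
      _ = (binThin b hb e).bind fun l =>
            PMF.conv (PMF.conv (PMF.pure l) (thinnedCompound G κ (e - l))) (offspring G κ b hb) :=
          PMF.bind_congr_support _ step
      _ = offspringSum G κ b hb (e + 1) := by rw [← PMF.bind_conv, ih]; rfl

theorem immigration_eq_bind_thinnedCompound (τ : ℝ≥0) :
    immigration G τ κ = (poissonPMF τ).bind (thinnedCompound G κ) := rfl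

end GaltonWatson

/-- Galton–Watson representation of the exposed process of the thinning-based
CP-INGARCH(1,1) model: the one-step transition from `E = e` (draw `L ~ Bin(e, β)`,
`A = e - L`, `I ~ Pois(τ)`, `X = ψ *_G (I + A)`, `C | X ~ Pois(κ·X)`, `E' = L + C`) has the
same distribution as `∑_{k=1}^e B_k + I*` with `B₁, …, B_e` i.i.d. offspring variables and
`I*` an independent immigration variable. -/
theorem cp_ingarch_galton_watson
    (G : PMF ℕ) (τ κ : ℝ≥0) (β : ℝ≥0) (hβ : β < 1)
    (e : ℕ) :
    ((binThin (β : ℝ≥0∞) (by exact_mod_cast hβ.le) e).bind fun l =>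
      (poissonPMF τ).bind fun i =>
        (compG G (i + (e - l))).bind fun x =>
          (poissonPMF (κ * x)).map fun c => l + c) =
    (offspringSum G κ (β : ℝ≥0∞) (by exact_mod_cast hβ.le) e).bind fun s =>
      (immigration G τ κ).map fun istar => s + istar := by
  have transition : ∀ l i : ℕ,
      ((compG G (i + (e - l))).bind fun x => (poissonPMF (κ * x)).map fun c => l + c) =
        PMF.conv (PMF.conv (PMF.pure l) (thinnedCompound G κ (e - l)))
          (thinnedCompound G κ i) := by
    intro l i
    rw [PMF.conv_assoc, ← thinnedCompound_add, add_comm, PMF.conv, PMF.pure_bind,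
      thinnedCompound, PMF.bind_bind]
    rfl
  simp only [transition, ← PMF.conv_bind, ← immigration_eq_bind_thinnedCompound,
    ← PMF.bind_conv, binThin_bind_conv_thinnedCompound]
  rfl
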